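/- arXiv:2104.07061 — 3 statements merged into one kernel-verified Lean document; each statement's English description precedes it below -/
import Mathlib

section
/- The number of binary hierarchical clusterings (rooted binary trees with labeled leaves) on a set of n ≥ 2 elements is (2n-3)!!, the double factorial of 2n-3. -/
/-!
Removing a leaf `x` from a clustering of `X ∪ {x}` leaves a clustering of `X` in which `x`
was attached as the sibling of exactly one cluster `A`, and conversely `x` may be attached as
the sibling of any cluster. So clusterings of `X ∪ {x}` correspond to pairs `(H, A ∈ H)`.
Attaching a leaf adds exactly two clusters, so a clustering of an `n`-set has `2n - 1`
clusters, and adding a point multiplies the count by `2n - 1`; starting from `1` for a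
singleton this gives `(2n - 3)!!`.
-/

open Finset

/-- A binary hierarchical clustering of `X`: a laminar family of nonempty subsets of `X`
containing `X` and all singletons, in which every non-singleton member is the disjoint
union of exactly two other members. -/
def IsHC {α : Type*} [DecidableEq α] (X : Finset α) (H : Finset (Finset α)) : Prop :=
  X ∈ H ∧ (∀ x ∈ X, {x} ∈ H) ∧ (∀ A ∈ H, A.Nonempty ∧ A ⊆ X) ∧
    (∀ A ∈ H, ∀ B ∈ H, A ⊆ B ∨ B ⊆ A ∨ Disjoint A B) ∧
    (∀ A ∈ H, 1 < A.card → ∃ B ∈ H, ∃ C ∈ H, Disjoint B C ∧ B ∪ C = A)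

open scoped Nat

section

variable {α : Type*} [DecidableEq α] {X A B B' C : Finset α} {H H' : Finset (Finset α)} {x a : α}

theorem insert_ne_singleton (hB : B.Nonempty) (hx : x ∉ B) : insert x B ≠ {x} :=
  fun h ↦ hB.ne_empty (by rw [← erase_insert hx, h, erase_singleton])

theorem insert_injOn_of_notMem : Set.InjOn (insert x) {B : Finset α | x ∉ B} :=
  fun B hB C hC h ↦ by rw [← erase_insert hB, h, erase_insert hC]

/-- Attach the new leaf `x` as the sibling of the cluster `A`: every cluster strictly containing
`A` gains `x`, and `{x}` and the new parent `insert x A` of `A` are added. -/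
def insertLeaf (x : α) (H : Finset (Finset α)) (A : Finset α) : Finset (Finset α) :=
  insert {x} (H.filter (¬ A ⊂ ·) ∪ (H.filter (A ⊆ ·)).image (insert x))

theorem mem_insertLeaf :
    B' ∈ insertLeaf x H A ↔
      B' = {x} ∨ (B' ∈ H ∧ ¬ A ⊂ B') ∨ ∃ B ∈ H, A ⊆ B ∧ insert x B = B' := by
  simp [insertLeaf, and_assoc]

def eraseLeaf (x : α) (H' : Finset (Finset α)) : Finset (Finset α) :=
  (H'.image (·.erase x)).erase ∅

theorem mem_eraseLeaf :
    B ∈ eraseLeaf x H' ↔ B.Nonempty ∧ x ∉ B ∧ (B ∈ H' ∨ insert x B ∈ H') := by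
  simp only [eraseLeaf, mem_erase, mem_image, nonempty_iff_ne_empty]
  constructor
  · rintro ⟨hne, B', hB', rfl⟩
    refine ⟨hne, notMem_erase x B', ?_⟩
    by_cases hxB' : x ∈ B'
    · exact .inr (by rwa [insert_erase hxB'])
    · exact .inl (by rwa [erase_eq_of_notMem hxB'])
  · rintro ⟨hne, hxB, hB | hB⟩
    · exact ⟨hne, B, hB, erase_eq_of_notMem hxB⟩
    · exact ⟨hne, _, hB, erase_insert hxB⟩

namespace IsHC

theorem root_mem (h : IsHC X H) : X ∈ H := h.1

theorem singleton_mem (h : IsHC X H) (hx : x ∈ X) : {x} ∈ H := h.2.1 x hx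

theorem nonempty (h : IsHC X H) (hA : A ∈ H) : A.Nonempty := (h.2.2.1 A hA).1

theorem subset (h : IsHC X H) (hA : A ∈ H) : A ⊆ X := (h.2.2.1 A hA).2

theorem laminar (h : IsHC X H) (hA : A ∈ H) (hB : B ∈ H) : A ⊆ B ∨ B ⊆ A ∨ Disjoint A B :=
  h.2.2.2.1 A hA B hB

theorem exists_split (h : IsHC X H) (hA : A ∈ H) (hcard : 1 < #A) :
    ∃ B ∈ H, ∃ C ∈ H, Disjoint B C ∧ B ∪ C = A :=
  h.2.2.2.2 A hA hcard

theorem notMem (h : IsHC X H) (hx : x ∉ X) (hA : A ∈ H) : x ∉ A :=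
  fun hxA ↦ hx (h.subset hA hxA)

theorem subset_or_subset_of_ssubset_union (h : IsHC X H) (hA : A ∈ H) (hB : B ∈ H)
    (hC : C ∈ H) (hABC : A ⊂ B ∪ C) : A ⊆ B ∨ A ⊆ C := by
  rcases h.laminar hA hB with hAB | hBA | hAB
  · exact .inl hAB
  rcases h.laminar hA hC with hAC | hCA | hAC
  · exact .inr hAC
  · exact absurd (union_subset hBA hCA) hABC.not_subset
  · exact .inl fun y hy ↦ (mem_union.1 (hABC.subset hy)).resolve_right (disjoint_left.1 hAC hy)
  · exact .inr fun y hy ↦ (mem_union.1 (hABC.subset hy)).resolve_left (disjoint_left.1 hAB hy)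

theorem eq_singleton (h : IsHC {a} H) : H = {{a}} :=
  eq_singleton_iff_unique_mem.2 ⟨h.root_mem, fun _ hA ↦
    (h.nonempty hA).subset_singleton_iff.1 (h.subset hA)⟩

theorem subset_insert_or_disjoint (h : IsHC X H) (hxB : x ∉ B) (hB : B ∈ H) (hAB : ¬ A ⊂ B)
    (hC : C ∈ H) (hAC : A ⊆ C) : B ⊆ insert x C ∨ Disjoint B (insert x C) := by
  rcases h.laminar hB hC with hBC | hCB | hBC
  · exact .inl (hBC.trans (subset_insert x C))
  · obtain rfl : A = B := eq_of_le_of_not_lt (hAC.trans hCB) hAB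
    exact .inl (hAC.trans (subset_insert x C))
  · exact .inr (disjoint_insert_right.2 ⟨hxB, hBC⟩)

theorem eq_of_subset_of_insert_mem (h : IsHC X H) (hA : A.Nonempty) (hxA : insert x A ∈ H)
    (hB : B ∈ H) (hxB : x ∉ B) (hAB : A ⊆ B) : B = A := by
  rcases h.laminar hB hxA with hBA | hAB' | hBA
  · exact ((subset_insert_iff_of_notMem hxB).1 hBA).antisymm hAB
  · exact absurd (hAB' (mem_insert_self x A)) hxB
  · obtain ⟨a, ha⟩ := hA
    exact absurd (mem_insert_of_mem ha) (disjoint_left.1 hBA (hAB ha))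

theorem exists_split_of_mem_insertLeaf (h : IsHC X H) (hx : x ∉ X) (hA : A ∈ H)
    (hB' : B' ∈ insertLeaf x H A) (hcard : 1 < #B') :
    ∃ P ∈ insertLeaf x H A, ∃ Q ∈ insertLeaf x H A, Disjoint P Q ∧ P ∪ Q = B' := by
  have hAne := h.nonempty hA
  rcases mem_insertLeaf.1 hB' with rfl | ⟨hB, hAB⟩ | ⟨B, hB, hAB, rfl⟩
  · simp at hcard
  · obtain ⟨C, hC, D, hD, hCD, rfl⟩ := h.exists_split hB hcard
    exact ⟨C, mem_insertLeaf.2 (.inr (.inl ⟨hC, fun hAC ↦ hAB (hAC.trans_subset le_sup_left)⟩)),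
      D, mem_insertLeaf.2 (.inr (.inl ⟨hD, fun hAD ↦ hAB (hAD.trans_subset le_sup_right)⟩)),
      hCD, rfl⟩
  rcases hAB.eq_or_ssubset with rfl | hAB
  · exact ⟨{x}, mem_insertLeaf.2 (.inl rfl), A, mem_insertLeaf.2 (.inr (.inl ⟨hA, irrefl A⟩)),
      disjoint_singleton_left.2 (h.notMem hx hA), (insert_eq x A).symm⟩
  have hcard : 1 < #B := Nat.lt_of_le_of_lt (card_pos.2 hAne) (card_lt_card hAB)
  obtain ⟨C, hC, D, hD, hCD, rfl⟩ := h.exists_split hB hcard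
  -- `x` joins the child of `C ∪ D` that contains `A`
  have key : ∀ {C D}, C ∈ H → D ∈ H → Disjoint C D → A ⊆ C →
      ∃ P ∈ insertLeaf x H A, ∃ Q ∈ insertLeaf x H A, Disjoint P Q ∧ P ∪ Q = insert x (C ∪ D) :=
    fun {C D} hC hD hCD hAC ↦ ⟨insert x C, mem_insertLeaf.2 (.inr (.inr ⟨C, hC, hAC, rfl⟩)),
      D, mem_insertLeaf.2 (.inr (.inl ⟨hD,
        fun hAD ↦ hAne.ne_empty (disjoint_self.1 (hCD.mono hAC hAD.subset))⟩)),
      disjoint_insert_left.2 ⟨h.notMem hx hD, hCD⟩, insert_union x C D⟩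
  rcases h.subset_or_subset_of_ssubset_union hA hC hD hAB with hAC | hAD
  · exact key hC hD hCD hAC
  · simpa only [union_comm] using key hD hC hCD.symm hAD

theorem isHC_insertLeaf (h : IsHC X H) (hx : x ∉ X) (hA : A ∈ H) :
    IsHC (insert x X) (insertLeaf x H A) := by
  have hAne := h.nonempty hA
  refine ⟨?_, ?_, ?_, ?_, ?_⟩
  · exact mem_insertLeaf.2 (.inr (.inr ⟨X, h.root_mem, h.subset hA, rfl⟩))
  · intro y hy
    rcases mem_insert.1 hy with rfl | hy
    · exact mem_insertLeaf.2 (.inl rfl)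
    · exact mem_insertLeaf.2 (.inr (.inl ⟨h.singleton_mem hy,
        fun hAy ↦ hAne.ne_empty (ssubset_singleton_iff.1 hAy)⟩))
  · intro B' hB'
    rcases mem_insertLeaf.1 hB' with rfl | ⟨hB, -⟩ | ⟨B, hB, -, rfl⟩
    · simp
    · exact ⟨h.nonempty hB, (h.subset hB).trans (subset_insert x X)⟩
    · exact ⟨insert_nonempty x B, insert_subset_insert x (h.subset hB)⟩
  · intro B' hB' C' hC'
    rcases mem_insertLeaf.1 hB' with rfl | ⟨hB, hAB⟩ | ⟨B, hB, hAB, rfl⟩ <;>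
      rcases mem_insertLeaf.1 hC' with rfl | ⟨hC, hAC⟩ | ⟨C, hC, hAC, rfl⟩
    · exact .inl subset_rfl
    · exact .inr (.inr (disjoint_singleton_left.2 (h.notMem hx hC)))
    · exact .inl (singleton_subset_iff.2 (mem_insert_self x C))
    · exact .inr (.inr (disjoint_singleton_right.2 (h.notMem hx hB)))
    · exact h.laminar hB hC
    · exact (h.subset_insert_or_disjoint (h.notMem hx hB) hB hAB hC hAC).imp_right .inr
    · exact .inr (.inl (singleton_subset_iff.2 (mem_insert_self x B)))
    · exact (h.subset_insert_or_disjoint (h.notMem hx hC) hC hAC hB hAB).elim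
        (.inr ∘ .inl) fun hCB ↦ .inr (.inr hCB.symm)
    · rcases h.laminar hB hC with hBC | hCB | hBC
      · exact .inl (insert_subset_insert x hBC)
      · exact .inr (.inl (insert_subset_insert x hCB))
      · exact absurd (disjoint_self.1 (hBC.mono hAB hAC)) hAne.ne_empty
  · exact fun B' hB' hcard ↦ h.exists_split_of_mem_insertLeaf hx hA hB' hcard

theorem card_insertLeaf (h : IsHC X H) (hx : x ∉ X) (hA : A ∈ H) :
    #(insertLeaf x H A) = #H + 2 := by
  have hxH : ∀ B ∈ H, x ∉ B := fun _ hB ↦ h.notMem hx hB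
  have hsing : {x} ∉ H.filter (¬ A ⊂ ·) ∪ (H.filter (A ⊆ ·)).image (insert x) := by
    simp only [mem_union, mem_filter, mem_image, not_or, not_exists, not_and]
    exact ⟨fun hxH' _ ↦ hxH _ hxH' (mem_singleton_self x),
      fun B hB ↦ insert_ne_singleton (h.nonempty hB.1) (hxH B hB.1)⟩
  have hdisj : Disjoint (H.filter (¬ A ⊂ ·)) ((H.filter (A ⊆ ·)).image (insert x)) := by
    simp only [disjoint_left, mem_filter, mem_image]
    rintro _ ⟨hB, -⟩ ⟨C, -, rfl⟩
    exact hxH _ hB (mem_insert_self x C)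
  have hinj : Set.InjOn (insert x) (H.filter (A ⊆ ·) : Set (Finset α)) :=
    insert_injOn_of_notMem.mono fun B hB ↦ hxH B (mem_filter.1 hB).1
  have hsup : H.filter (A ⊆ ·) = insert A (H.filter (A ⊂ ·)) := by
    ext B
    simp only [mem_filter, mem_insert, subset_iff_ssubset_or_eq]
    constructor
    · rintro ⟨hB, hAB | rfl⟩ <;> tauto
    · rintro (rfl | ⟨hB, hAB⟩) <;> tauto
  rw [insertLeaf, card_insert_of_notMem hsing, card_union_of_disjoint hdisj,
    card_image_of_injOn hinj, hsup, card_insert_of_notMem (by simp),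
    ← card_filter_add_card_filter_not (s := H) (A ⊂ ·)]
  omega

theorem insert_mem_insertLeaf_iff (h : IsHC X H) (hx : x ∉ X) (hB : B ∈ H) :
    insert x B ∈ insertLeaf x H A ↔ A ⊆ B := by
  have hxB := h.notMem hx hB
  refine ⟨fun hB' ↦ ?_, fun hAB ↦ mem_insertLeaf.2 (.inr (.inr ⟨B, hB, hAB, rfl⟩))⟩
  rcases mem_insertLeaf.1 hB' with hBx | ⟨hB', -⟩ | ⟨C, hC, hAC, hCB⟩
  · exact absurd hBx (insert_ne_singleton (h.nonempty hB) hxB)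
  · exact absurd (mem_insert_self x B) (h.notMem hx hB')
  · rwa [← insert_injOn_of_notMem (h.notMem hx hC) hxB hCB]

theorem eraseLeaf_insertLeaf (h : IsHC X H) (hx : x ∉ X) :
    eraseLeaf x (insertLeaf x H A) = H := by
  ext B
  rw [mem_eraseLeaf]
  constructor
  · rintro ⟨hne, hxB, hB | hB⟩
    · rcases mem_insertLeaf.1 hB with rfl | ⟨hB, -⟩ | ⟨C, -, -, rfl⟩
      · exact absurd (mem_singleton_self x) hxB
      · exact hB
      · exact absurd (mem_insert_self x C) hxB
    · rcases mem_insertLeaf.1 hB with hBx | ⟨hB, -⟩ | ⟨C, hC, -, hCB⟩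
      · exact absurd hBx (insert_ne_singleton hne hxB)
      · exact absurd (mem_insert_self x B) (h.notMem hx hB)
      · rwa [← insert_injOn_of_notMem (h.notMem hx hC) hxB hCB]
  · intro hB
    refine ⟨h.nonempty hB, h.notMem hx hB, ?_⟩
    by_cases hAB : A ⊂ B
    · exact .inr ((h.insert_mem_insertLeaf_iff hx hB).2 hAB.subset)
    · exact .inl (mem_insertLeaf.2 (.inr (.inl ⟨hB, hAB⟩)))

theorem exists_split_of_mem_eraseLeaf (h' : IsHC (insert x X) H') (hB : B ∈ eraseLeaf x H')
    (hcard : 1 < #B) :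
    ∃ C ∈ eraseLeaf x H', ∃ D ∈ eraseLeaf x H', Disjoint C D ∧ C ∪ D = B := by
  have split_of_mem : ∀ {B}, B ∈ H' → x ∉ B → 1 < #B →
      ∃ C ∈ eraseLeaf x H', ∃ D ∈ eraseLeaf x H', Disjoint C D ∧ C ∪ D = B := by
    intro B hB hxB hcard
    obtain ⟨C, hC, D, hD, hCD, rfl⟩ := h'.exists_split hB hcard
    exact ⟨C, mem_eraseLeaf.2 ⟨h'.nonempty hC, fun hxC ↦ hxB (mem_union_left D hxC), .inl hC⟩,
      D, mem_eraseLeaf.2 ⟨h'.nonempty hD, fun hxD ↦ hxB (mem_union_right C hxD), .inl hD⟩,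
      hCD, rfl⟩
  obtain ⟨-, hxB, hB' | hB'⟩ := mem_eraseLeaf.1 hB
  · exact split_of_mem hB' hxB hcard
  obtain ⟨C, hC, D, hD, hCD, hCDB⟩ :=
    h'.exists_split hB' (by rw [card_insert_of_notMem hxB]; omega)
  -- `B` is split by the other child of `insert x B` together with the child containing `x`
  -- minus `x`, unless that child is `{x}`, in which case the other child is `B` itself
  have key : ∀ {C D}, C ∈ H' → D ∈ H' → Disjoint C D → C ∪ D = insert x B → x ∈ C →
      ∃ C ∈ eraseLeaf x H', ∃ D ∈ eraseLeaf x H', Disjoint C D ∧ C ∪ D = B := by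
    intro C D hC hD hCD hCDB hxC
    have hxD : x ∉ D := disjoint_left.1 hCD hxC
    have hB : B = C.erase x ∪ D := by
      rw [← erase_eq_of_notMem hxD, ← erase_union_distrib, hCDB, erase_insert hxB]
    by_cases hCx : C = {x}
    · rw [hCx, erase_singleton, empty_union] at hB
      subst hB
      exact split_of_mem hD hxD hcard
    have hCx' : (C.erase x).Nonempty :=
      (erase_nonempty hxC).2 ((nontrivial_iff_ne_singleton hxC).2 hCx)
    exact ⟨C.erase x, mem_eraseLeaf.2 ⟨hCx', notMem_erase x C, .inr (by rwa [insert_erase hxC])⟩,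
      D, mem_eraseLeaf.2 ⟨h'.nonempty hD, hxD, .inl hD⟩,
      hCD.mono_left (erase_subset x C), hB.symm⟩
  rcases mem_union.1 (hCDB ▸ mem_insert_self x B) with hxC | hxD
  · exact key hC hD hCD hCDB hxC
  · exact key hD hC hCD.symm (union_comm C D ▸ hCDB) hxD

theorem isHC_eraseLeaf (h' : IsHC (insert x X) H') (hx : x ∉ X) (hX : X.Nonempty) :
    IsHC X (eraseLeaf x H') := by
  refine ⟨mem_eraseLeaf.2 ⟨hX, hx, .inr h'.root_mem⟩, ?_, ?_, ?_,
    fun B hB hcard ↦ h'.exists_split_of_mem_eraseLeaf hB hcard⟩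
  · intro y hy
    have hxy : x ∉ ({y} : Finset α) := notMem_singleton.2 (ne_of_mem_of_not_mem hy hx).symm
    exact mem_eraseLeaf.2
      ⟨singleton_nonempty y, hxy, .inl (h'.singleton_mem (mem_insert_of_mem hy))⟩
  · intro B hB
    obtain ⟨hne, hxB, hB' | hB'⟩ := mem_eraseLeaf.1 hB
    · exact ⟨hne, (subset_insert_iff_of_notMem hxB).1 (h'.subset hB')⟩
    · exact ⟨hne, (subset_insert_iff_of_notMem hxB).1 ((subset_insert x B).trans (h'.subset hB'))⟩
  · simp only [eraseLeaf, mem_erase, mem_image]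
    rintro _ ⟨-, B', hB', rfl⟩ _ ⟨-, C', hC', rfl⟩
    rcases h'.laminar hB' hC' with hBC | hCB | hBC
    · exact .inl (erase_subset_erase x hBC)
    · exact .inr (.inl (erase_subset_erase x hCB))
    · exact .inr (.inr (hBC.mono (erase_subset x B') (erase_subset x C')))

theorem exists_sibling (h' : IsHC (insert x X) H') (hx : x ∉ X) (hX : X.Nonempty) :
    ∃ A ∈ H', x ∉ A ∧ insert x A ∈ H' ∧ ∀ B ∈ H', x ∈ B → B ≠ {x} → insert x A ⊆ B := by
  obtain ⟨P, ⟨hP, hxP, hPx⟩, hPmin⟩ := exists_minimal_of_wellFoundedLT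
    (fun B ↦ B ∈ H' ∧ x ∈ B ∧ B ≠ {x})
    ⟨insert x X, h'.root_mem, mem_insert_self x X, insert_ne_singleton hX hx⟩
  have hPsub : ∀ B ∈ H', x ∈ B → B ≠ {x} → P ⊆ B := by
    intro B hB hxB hBx
    rcases h'.laminar hP hB with hPB | hBP | hPB
    · exact hPB
    · exact hPmin ⟨hB, hxB, hBx⟩ hBP
    · exact absurd hxB (disjoint_left.1 hPB hxP)
  obtain ⟨C, hC, D, hD, hCD, hCDP⟩ := h'.exists_split hP
    (one_lt_card_iff_nontrivial.2 ((nontrivial_iff_ne_singleton hxP).2 hPx))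
  -- by minimality of `P`, the child of `P` containing `x` is `{x}`
  have key : ∀ {C D}, C ∈ H' → D ∈ H' → Disjoint C D → C ∪ D = P → x ∈ C →
      ∃ A ∈ H', x ∉ A ∧ insert x A ∈ H' ∧ ∀ B ∈ H', x ∈ B → B ≠ {x} → insert x A ⊆ B := by
    intro C D hC hD hCD hCDP hxC
    obtain rfl : C = {x} := by
      by_contra hCx
      obtain ⟨d, hd⟩ := h'.nonempty hD
      exact disjoint_left.1 hCD (hPsub C hC hxC hCx (hCDP ▸ mem_union_right _ hd)) hd
    have hDP : insert x D = P := by rw [← hCDP, insert_eq]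
    exact ⟨D, hD, disjoint_left.1 hCD (mem_singleton_self x), hDP ▸ hP, hDP ▸ hPsub⟩
  rcases mem_union.1 (hCDP ▸ hxP) with hxC | hxD
  · exact key hC hD hCD hCDP hxC
  · exact key hD hC hCD.symm (union_comm C D ▸ hCDP) hxD

theorem exists_insertLeaf_eraseLeaf_eq (h' : IsHC (insert x X) H') (hx : x ∉ X)
    (hX : X.Nonempty) : ∃ A ∈ eraseLeaf x H', insertLeaf x (eraseLeaf x H') A = H' := by
  obtain ⟨A, hA, hxA, hP, hPsub⟩ := h'.exists_sibling hx hX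
  have hAne := h'.nonempty hA
  have eq_of_superset {B} (hB : B ∈ H') (hxB : x ∉ B) (hAB : A ⊆ B) : B = A :=
    h'.eq_of_subset_of_insert_mem hAne hP hB hxB hAB
  refine ⟨A, mem_eraseLeaf.2 ⟨hAne, hxA, .inl hA⟩, ?_⟩
  ext B'
  rw [mem_insertLeaf]
  constructor
  · rintro (rfl | ⟨hB', hAB'⟩ | ⟨B, hB, hAB, rfl⟩)
    · exact h'.singleton_mem (mem_insert_self x X)
    · obtain ⟨hne, hxB', hB' | hB'⟩ := mem_eraseLeaf.1 hB'
      · exact hB'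
      · have hAB : A ⊆ B' := (insert_subset_insert_iff hxA).1
          (hPsub _ hB' (mem_insert_self x B') (insert_ne_singleton hne hxB'))
        obtain rfl : A = B' := eq_of_le_of_not_lt hAB hAB'
        exact hA
    · obtain ⟨-, hxB, hB | hB⟩ := mem_eraseLeaf.1 hB
      · rwa [eq_of_superset hB hxB hAB]
      · exact hB
  · intro hB'
    by_cases hxB' : x ∈ B'
    · by_cases hB'x : B' = {x}
      · exact .inl hB'x
      refine .inr (.inr ⟨B'.erase x, mem_eraseLeaf.2 ⟨?_, notMem_erase x B', .inr ?_⟩, ?_,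
        insert_erase hxB'⟩)
      · exact (erase_nonempty hxB').2 ((nontrivial_iff_ne_singleton hxB').2 hB'x)
      · rwa [insert_erase hxB']
      · rw [← insert_subset_insert_iff hxA, insert_erase hxB']
        exact hPsub B' hB' hxB' hB'x
    · refine .inr (.inl ⟨mem_eraseLeaf.2 ⟨h'.nonempty hB', hxB', .inl hB'⟩, fun hAB ↦ ?_⟩)
      exact hAB.ne (eq_of_superset hB' hxB' hAB.subset).symm

theorem card_eq (h : IsHC X H) : #H = 2 * #X - 1 := by
  induction h.nonempty h.root_mem using Nonempty.cons_induction generalizing H with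
  | singleton a => simp [h.eq_singleton]
  | cons x X hx hX ih =>
    rw [cons_eq_insert] at h ⊢
    obtain ⟨A, hA, hH⟩ := h.exists_insertLeaf_eraseLeaf_eq hx hX
    have hHC := h.isHC_eraseLeaf hx hX
    rw [← hH, hHC.card_insertLeaf hx hA, ih hHC, card_insert_of_notMem hx]
    have := hX.card_pos
    omega

end IsHC

theorem isHC_singleton (a : α) : IsHC {a} {{a}} := by
  refine ⟨mem_singleton_self _, ?_, ?_, ?_, ?_⟩ <;> simp

theorem finite_isHC (X : Finset α) : Finite {H : Finset (Finset α) // IsHC X H} :=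
  Set.Finite.subset (X.powerset.powerset.finite_toSet) fun H (h : IsHC X H) ↦
    mem_powerset.2 fun _ hA ↦ mem_powerset.2 (h.subset hA)

theorem bijective_insertLeaf (hx : x ∉ X) (hX : X.Nonempty) :
    Function.Bijective fun p : Σ H : {H : Finset (Finset α) // IsHC X H}, H.1 ↦
      (⟨insertLeaf x p.1.1 p.2.1, p.1.2.isHC_insertLeaf hx p.2.2⟩ :
        {H' : Finset (Finset α) // IsHC (insert x X) H'}) := by
  refine ⟨?_, ?_⟩
  · rintro ⟨⟨H₁, h₁⟩, A₁, hA₁⟩ ⟨⟨H₂, h₂⟩, A₂, hA₂⟩ heq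
    simp only [Subtype.mk.injEq] at heq
    obtain rfl : H₁ = H₂ := by
      rw [← h₁.eraseLeaf_insertLeaf hx (A := A₁), heq, h₂.eraseLeaf_insertLeaf hx]
    have self_mem {A} (hA : A ∈ H₁) : insert x A ∈ insertLeaf x H₁ A :=
      (h₁.insert_mem_insertLeaf_iff hx hA).2 subset_rfl
    obtain rfl : A₁ = A₂ := subset_antisymm
      ((h₁.insert_mem_insertLeaf_iff hx hA₂).1 (heq ▸ self_mem hA₂))
      ((h₁.insert_mem_insertLeaf_iff hx hA₁).1 (heq ▸ self_mem hA₁))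
    rfl
  · rintro ⟨H', h'⟩
    obtain ⟨A, hA, hH'⟩ := h'.exists_insertLeaf_eraseLeaf_eq hx hX
    exact ⟨⟨⟨_, h'.isHC_eraseLeaf hx hX⟩, A, hA⟩, Subtype.ext hH'⟩

theorem card_isHC_insert (hx : x ∉ X) (hX : X.Nonempty) :
    Nat.card {H' : Finset (Finset α) // IsHC (insert x X) H'} =
      (2 * #X - 1) * Nat.card {H : Finset (Finset α) // IsHC X H} := by
  have := finite_isHC X
  have := Fintype.ofFinite {H : Finset (Finset α) // IsHC X H}
  rw [← Nat.card_congr (Equiv.ofBijective _ (bijective_insertLeaf hx hX)), Nat.card_sigma,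
    Nat.card_eq_fintype_card, ← card_univ, mul_comm, ← smul_eq_mul, ← sum_const]
  exact sum_congr rfl fun H _ ↦ by rw [Nat.card_eq_finsetCard, H.2.card_eq]

theorem card_isHC (hX : X.Nonempty) :
    Nat.card {H : Finset (Finset α) // IsHC X H} = (2 * #X - 3)‼ := by
  induction hX using Nonempty.cons_induction with
  | singleton a =>
    exact Nat.card_eq_one_iff_exists.2
      ⟨⟨_, isHC_singleton a⟩, fun H ↦ Subtype.ext H.2.eq_singleton⟩
  | cons x X hx hX ih =>
    rw [cons_eq_insert, card_isHC_insert hx hX, ih, card_insert_of_notMem hx]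
    obtain ⟨k, hk⟩ : ∃ k, #X = k + 1 := Nat.exists_eq_add_one.2 hX.card_pos
    rw [hk, show 2 * (k + 1 + 1) - 3 = 2 * k + 1 by omega,
      show 2 * (k + 1) - 1 = 2 * k + 1 by omega, show 2 * (k + 1) - 3 = 2 * k - 1 by omega,
      Nat.doubleFactorial_add_one]

end

/-- The number of binary hierarchical clusterings on a set of `n ≥ 2` elements is `(2n-3)!!`. -/
theorem stmt_0 {α : Type*} [DecidableEq α] (X : Finset α) (n : ℕ) (hn : 2 ≤ n)
    (hX : X.card = n) :
    Nat.card {H : Finset (Finset α) // IsHC X H} = Nat.doubleFactorial (2 * n - 3) := by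
  subst hX
  exact card_isHC (card_pos.1 (by omega))
end

section
/- The heuristic h_cc(X) = Σ_{i<j, w_{ij}>0} w_{ij} is admissible for hierarchical correlation clustering: for every binary hierarchical clustering H of X, h_cc(X) ≤ φ_HCC(H), where φ_HCC(H) = Σ_{(X_L,X_R) ∈ sibs(H)} ψ(X_L, X_R). -/
/-!
Each pair `x ≠ y` of `X` is separated by the split of some cluster (the smallest cluster
containing both), so its positive weight is paid for in the cross term of that sibling cost;
the remaining terms of `ψ` are nonnegative.
-/

open Finset

/-- Hierarchical correlation clustering sibling cost: positive weights across the cut plus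
magnitudes of negative weights within each side. -/
noncomputable def psiHCC {α : Type*} [LinearOrder α] (w : α → α → ℝ)
    (XL XR : Finset α) : ℝ :=
  (∑ i ∈ XL, ∑ j ∈ XR, if 0 < w i j then w i j else 0) +
  (∑ p ∈ XL.offDiag.filter (fun p => p.1 < p.2), if w p.1 p.2 < 0 then |w p.1 p.2| else 0) +
  (∑ p ∈ XR.offDiag.filter (fun p => p.1 < p.2), if w p.1 p.2 < 0 then |w p.1 p.2| else 0)

lemma Finset.ssubset_of_disjoint_of_union_eq {α : Type*} [DecidableEq α] {A B C : Finset α}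
    (hC : C.Nonempty) (hBC : Disjoint B C) (h : B ∪ C = A) : B ⊂ A := by
  refine ssubset_iff_subset_ne.2 ⟨h ▸ subset_union_left, ?_⟩
  rintro rfl
  obtain ⟨z, hz⟩ := hC
  exact disjoint_right.1 hBC hz (h ▸ mem_union_right B hz)

lemma Finset.sum_le_sum_sum_filter_of_forall_exists {ι κ M : Type*} [AddCommMonoid M]
    [PartialOrder M] [IsOrderedAddMonoid M] {s : Finset ι} {t : Finset κ} {Q : κ → ι → Prop}
    [∀ a i, Decidable (Q a i)] {g : ι → M} (hg : ∀ i ∈ s, 0 ≤ g i)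
    (hQ : ∀ i ∈ s, ∃ a ∈ t, Q a i) :
    ∑ i ∈ s, g i ≤ ∑ a ∈ t, ∑ i ∈ s with Q a i, g i := by
  calc ∑ i ∈ s, g i ≤ ∑ i ∈ s, ∑ a ∈ t with Q a i, g i := sum_le_sum fun i hi => by
        obtain ⟨a, ha, hQa⟩ := hQ i hi
        exact single_le_sum (f := fun _ => g i) (fun _ _ => hg i hi) (mem_filter.2 ⟨ha, hQa⟩)
    _ = ∑ a ∈ t, ∑ i ∈ s with Q a i, g i := by
        simp only [sum_filter]
        exact sum_comm

section Separation

variable {α : Type*}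

def Separates (B C : Finset α) (x y : α) : Prop :=
  x ∈ B ∧ y ∈ C ∨ y ∈ B ∧ x ∈ C

instance [DecidableEq α] (B C : Finset α) (x y : α) : Decidable (Separates B C x y) := by
  unfold Separates; infer_instance

theorem exists_mem_separates_of_split [DecidableEq α] {H : Finset (Finset α)}
    {L R : Finset α → Finset α} (hne : ∀ A ∈ H, A.Nonempty)
    (hLR : ∀ A ∈ H, 1 < A.card → L A ∈ H ∧ R A ∈ H ∧ Disjoint (L A) (R A) ∧ L A ∪ R A = A)
    {A : Finset α} (hA : A ∈ H) {x y : α} (hx : x ∈ A) (hy : y ∈ A) (hxy : x ≠ y) :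
    ∃ B ∈ H, 1 < B.card ∧ Separates (L B) (R B) x y := by
  induction A using Finset.strongInduction with
  | H A ih =>
    have hcard : 1 < A.card := one_lt_card.2 ⟨x, hx, y, hy, hxy⟩
    obtain ⟨hL, hR, hdisj, hunion⟩ := hLR A hA hcard
    have hLA : L A ⊂ A := ssubset_of_disjoint_of_union_eq (hne _ hR) hdisj hunion
    have hRA : R A ⊂ A :=
      ssubset_of_disjoint_of_union_eq (hne _ hL) hdisj.symm (union_comm (R A) _ ▸ hunion)
    rw [← hunion, mem_union] at hx hy
    rcases hx with hxL | hxR <;> rcases hy with hyL | hyR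
    · exact ih _ hLA hL hxL hyL
    · exact ⟨A, hA, hcard, .inl ⟨hxL, hyR⟩⟩
    · exact ⟨A, hA, hcard, .inr ⟨hyL, hxR⟩⟩
    · exact ih _ hRA hR hxR hyR

theorem sum_filter_separates_le_sum_sum [LinearOrder α] {f : α → α → ℝ}
    (hf : ∀ i j, f i j = f j i) (hf0 : ∀ i j, 0 ≤ f i j) {s : Finset (α × α)}
    (hs : ∀ p ∈ s, p.1 ≤ p.2) (B C : Finset α) :
    ∑ p ∈ s with Separates B C p.1 p.2, f p.1 p.2 ≤ ∑ i ∈ B, ∑ j ∈ C, f i j := by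
  set sort : α × α → α × α := fun q => (min q.1 q.2, max q.1 q.2)
  have hsub : {p ∈ s | Separates B C p.1 p.2} ⊆ (B ×ˢ C).image sort := by
    intro p hp
    obtain ⟨hps, hsep⟩ := mem_filter.1 hp
    have hle := hs p hps
    rcases hsep with ⟨h1, h2⟩ | ⟨h2, h1⟩
    · exact mem_image.2 ⟨p, mem_product.2 ⟨h1, h2⟩, by simp [sort, hle]⟩
    · exact mem_image.2 ⟨p.swap, mem_product.2 ⟨h2, h1⟩, by simp [sort, hle]⟩
  have hsort : ∀ q, f (sort q).1 (sort q).2 = f q.1 q.2 := by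
    rintro ⟨i, j⟩
    rcases le_total i j with h | h
    · simp [sort, h]
    · simp [sort, h, hf i j]
  calc ∑ p ∈ s with Separates B C p.1 p.2, f p.1 p.2
      ≤ ∑ p ∈ (B ×ˢ C).image sort, f p.1 p.2 :=
        sum_le_sum_of_subset_of_nonneg hsub fun p _ _ => hf0 _ _
    _ ≤ ∑ q ∈ B ×ˢ C, f (sort q).1 (sort q).2 := sum_image_le_of_nonneg fun p _ => hf0 _ _
    _ = ∑ i ∈ B, ∑ j ∈ C, f i j := by simp only [hsort, sum_product]

end Separation

theorem sum_pos_le_psiHCC {α : Type*} [LinearOrder α] (w : α → α → ℝ) (B C : Finset α) :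
    ∑ i ∈ B, ∑ j ∈ C, (if 0 < w i j then w i j else 0) ≤ psiHCC w B C := by
  have hneg : ∀ D : Finset α,
      0 ≤ ∑ p ∈ D.offDiag.filter (fun p => p.1 < p.2), if w p.1 p.2 < 0 then |w p.1 p.2| else 0 :=
    fun D => sum_nonneg fun p _ => by split_ifs <;> simp
  have := hneg B
  have := hneg C
  unfold psiHCC
  linarith

/-- Admissibility of the heuristic `h_cc(X) = ∑_{i<j, w_{ij}>0} w_{ij}` for hierarchical
correlation clustering: it lower-bounds the cost `φ_HCC(H)` of every binary hierarchical
clustering `H` of `X` (sibling pairs given by split functions `L`, `R`). -/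
theorem stmt_5 {α : Type*} [LinearOrder α] (X : Finset α) (H : Finset (Finset α))
    (hH : IsHC X H) (w : α → α → ℝ) (hw : ∀ i j, w i j = w j i)
    (L R : Finset α → Finset α)
    (hLR : ∀ A ∈ H, 1 < A.card →
      L A ∈ H ∧ R A ∈ H ∧ Disjoint (L A) (R A) ∧ L A ∪ R A = A) :
    (∑ p ∈ X.offDiag.filter (fun p => p.1 < p.2), if 0 < w p.1 p.2 then w p.1 p.2 else 0) ≤
      ∑ A ∈ H.filter (fun A => 1 < A.card), psiHCC w (L A) (R A) := by
  set pos : α → α → ℝ := fun i j => if 0 < w i j then w i j else 0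
  have hpos0 : ∀ i j, 0 ≤ pos i j := fun i j => by simp only [pos]; split_ifs <;> linarith
  have hpos : ∀ i j, pos i j = pos j i := fun i j => by simp only [pos, hw i j]
  have hcover : ∀ p ∈ X.offDiag.filter (fun p => p.1 < p.2),
      ∃ A ∈ H.filter (fun A => 1 < A.card), Separates (L A) (R A) p.1 p.2 := by
    intro p hp
    obtain ⟨⟨hx, hy, hxy⟩, -⟩ := by simpa only [mem_filter, mem_offDiag] using hp
    obtain ⟨A, hA, hcard, hsep⟩ :=
      exists_mem_separates_of_split (fun A hA => (hH.2.2.1 A hA).1) hLR hH.1 hx hy hxy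
    exact ⟨A, mem_filter.2 ⟨hA, hcard⟩, hsep⟩
  calc ∑ p ∈ X.offDiag.filter (fun p => p.1 < p.2), pos p.1 p.2
      ≤ ∑ A ∈ H.filter (fun A => 1 < A.card),
          ∑ p ∈ X.offDiag.filter (fun p => p.1 < p.2) with Separates (L A) (R A) p.1 p.2,
            pos p.1 p.2 :=
        sum_le_sum_sum_filter_of_forall_exists (fun p _ => hpos0 _ _) hcover
    _ ≤ ∑ A ∈ H.filter (fun A => 1 < A.card), ∑ i ∈ L A, ∑ j ∈ R A, pos i j :=
        sum_le_sum fun A _ => sum_filter_separates_le_sum_sum hpos hpos0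
          (fun p hp => (mem_filter.1 hp).2.le) _ _
    _ ≤ ∑ A ∈ H.filter (fun A => 1 < A.card), psiHCC w (L A) (R A) :=
        sum_le_sum fun A _ => sum_pos_le_psiHCC w _ _
end

section
/- If the heuristic values satisfy h(X_ℓ) ≤ min over binary hierarchical clusterings H' of X_ℓ of φ(H') for every cluster X_ℓ, then for every partial hierarchical clustering H̆ of X with leaf clusters lvs(H̆), the value g(H̆) + Σ_{X_ℓ ∈ lvs(H̆)} h(X_ℓ) is a lower bound on the cost of every complete binary hierarchical clustering H of X extending H̆ (i.e., with H̆ ⊆ H). -/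
open Finset

/-- Ordered sibling pairs of `H`: pairs of disjoint members whose union is also a member. -/
def sibsOrd {α : Type*} [DecidableEq α] (H : Finset (Finset α)) :
    Finset (Finset α × Finset α) :=
  (H ×ˢ H).filter (fun p => Disjoint p.1 p.2 ∧ p.1 ∪ p.2 ∈ H)

/-- The cost `∑_{(A,B) ∈ sibs(H)} ψ(A,B)`; each unordered sibling pair is counted once
(for symmetric `ψ`, via halving the sum over ordered pairs). -/
noncomputable def cost {α : Type*} [DecidableEq α] (ψ : Finset α → Finset α → ℝ)
    (H : Finset (Finset α)) : ℝ :=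
  (∑ p ∈ sibsOrd H, ψ p.1 p.2) / 2

/-- The leaves of a partial hierarchical clustering: members with no proper subset in it. -/
def lvs {α : Type*} [DecidableEq α] (Hb : Finset (Finset α)) : Finset (Finset α) :=
  Hb.filter (fun A => ∀ B ∈ Hb, ¬ B ⊂ A)

/-!
The sibling pairs of `H̆`, together with the sibling pairs of the subtrees of `H` rooted at
the leaves of `H̆`, are distinct sibling pairs of `H`: a pair inside a leaf `A` cannot be a
pair of `H̆` because its members would be proper subsets of `A` in `H̆`, and subtrees at
distinct leaves are disjoint because the leaves are. As `ψ ≥ 0`, this bounds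
`g(H̆) + ∑ φ(subtree at A)` by `φ(H)`, and admissibility bounds each `h(A)` by the
cost of its subtree, which is itself a hierarchical clustering of `A`.
-/

section

variable {α : Type*} [DecidableEq α]

def subtree (H : Finset (Finset α)) (A : Finset α) : Finset (Finset α) :=
  H.filter (· ⊆ A)

lemma mem_sibsOrd {H : Finset (Finset α)} {p : Finset α × Finset α} :
    p ∈ sibsOrd H ↔ (p.1 ∈ H ∧ p.2 ∈ H) ∧ Disjoint p.1 p.2 ∧ p.1 ∪ p.2 ∈ H := by
  simp only [sibsOrd, mem_filter, mem_product]

lemma sibsOrd_mono {H₁ H₂ : Finset (Finset α)} (hsub : H₁ ⊆ H₂) :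
    sibsOrd H₁ ⊆ sibsOrd H₂ := by
  intro p hp
  rw [mem_sibsOrd] at hp ⊢
  exact ⟨⟨hsub hp.1.1, hsub hp.1.2⟩, hp.2.1, hsub hp.2.2⟩

lemma mem_sibsOrd_subtree {H : Finset (Finset α)} {A : Finset α} {p : Finset α × Finset α}
    (hp : p ∈ sibsOrd (subtree H A)) : p.1 ∈ H ∧ p.2 ∈ H ∧ p.1 ⊆ A ∧ p.2 ⊆ A := by
  simp only [mem_sibsOrd, subtree, mem_filter] at hp
  exact ⟨hp.1.1.1, hp.1.2.1, hp.1.1.2, hp.1.2.2⟩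

lemma IsHC.nonempty_of_mem {X A : Finset α} {H : Finset (Finset α)} (hH : IsHC X H)
    (hA : A ∈ H) : A.Nonempty :=
  (hH.2.2.1 A hA).1

lemma IsHC.subset_of_mem {X A : Finset α} {H : Finset (Finset α)} (hH : IsHC X H)
    (hA : A ∈ H) : A ⊆ X :=
  (hH.2.2.1 A hA).2

lemma IsHC.isHC_subtree {X A : Finset α} {H : Finset (Finset α)} (hH : IsHC X H) (hA : A ∈ H) :
    IsHC A (subtree H A) := by
  obtain ⟨-, hsing, hne, hlam, hsplit⟩ := hH
  simp only [IsHC, subtree, mem_filter]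
  refine ⟨⟨hA, subset_rfl⟩, fun x hx => ⟨hsing x ((hne A hA).2 hx), by simpa⟩,
    fun B hB => ⟨(hne B hB.1).1, hB.2⟩, fun B hB C hC => hlam B hB.1 C hC.1, ?_⟩
  intro B ⟨hBH, hBA⟩ hcard
  obtain ⟨C, hC, D, hD, hCD, rfl⟩ := hsplit B hBH hcard
  exact ⟨C, ⟨hC, subset_union_left.trans hBA⟩, D, ⟨hD, subset_union_right.trans hBA⟩, hCD, rfl⟩

lemma IsHC.pairwiseDisjoint_lvs {X : Finset α} {Hb H : Finset (Finset α)} (hH : IsHC X H)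
    (hsub : Hb ⊆ H) : (lvs Hb : Set (Finset α)).PairwiseDisjoint id := by
  intro A hA B hB hAB
  simp only [coe_filter, lvs, Set.mem_ofPred_eq] at hA hB
  rcases hH.2.2.2.1 A (hsub hA.1) B (hsub hB.1) with h | h | h
  · exact absurd (ssubset_of_subset_of_ne h hAB) (hB.2 A hA.1)
  · exact absurd (ssubset_of_subset_of_ne h (Ne.symm hAB)) (hA.2 B hB.1)
  · exact h

lemma IsHC.pairwiseDisjoint_sibsOrd_subtree {X : Finset α} {Hb H : Finset (Finset α)}
    (hH : IsHC X H) (hsub : Hb ⊆ H) :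
    (lvs Hb : Set (Finset α)).PairwiseDisjoint fun A => sibsOrd (subtree H A) := by
  intro A hA B hB hAB
  rw [Function.onFun, Finset.disjoint_left]
  intro p hpA hpB
  obtain ⟨h1H, -, h1A, -⟩ := mem_sibsOrd_subtree hpA
  obtain ⟨x, hx⟩ := hH.nonempty_of_mem h1H
  exact disjoint_left.mp (hH.pairwiseDisjoint_lvs hsub hA hB hAB) (h1A hx)
    ((mem_sibsOrd_subtree hpB).2.2.1 hx)

lemma IsHC.disjoint_sibsOrd_sibsOrd_subtree {X A : Finset α} {Hb H : Finset (Finset α)}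
    (hH : IsHC X H) (hA : A ∈ lvs Hb) : Disjoint (sibsOrd Hb) (sibsOrd (subtree H A)) := by
  rw [Finset.disjoint_left]
  intro p hp hpA
  obtain ⟨-, h2H, h1A, h2A⟩ := mem_sibsOrd_subtree hpA
  rw [mem_sibsOrd] at hp
  have h1 : p.1 = A := by
    by_contra hne
    exact (mem_filter.mp hA).2 p.1 hp.1.1 (ssubset_of_subset_of_ne h1A hne)
  obtain ⟨x, hx⟩ := hH.nonempty_of_mem h2H
  exact disjoint_left.mp hp.2.1 (h1 ▸ h2A hx) hx

lemma IsHC.cost_add_sum_cost_subtree_le {X : Finset α} {Hb H : Finset (Finset α)}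
    {ψ : Finset α → Finset α → ℝ} (hpos : ∀ A B, 0 ≤ ψ A B) (hH : IsHC X H) (hsub : Hb ⊆ H) :
    cost ψ Hb + ∑ A ∈ lvs Hb, cost ψ (subtree H A) ≤ cost ψ H := by
  have hdisj : Disjoint (sibsOrd Hb) ((lvs Hb).biUnion fun A => sibsOrd (subtree H A)) :=
    (disjoint_biUnion_right _ _ _).mpr fun A hA => hH.disjoint_sibsOrd_sibsOrd_subtree hA
  have hpairs : sibsOrd Hb ∪ (lvs Hb).biUnion (fun A => sibsOrd (subtree H A)) ⊆ sibsOrd H :=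
    union_subset (sibsOrd_mono hsub)
      (biUnion_subset.mpr fun A _ => sibsOrd_mono (filter_subset _ _))
  simp only [cost, ← sum_div, ← add_div]
  gcongr
  rw [← sum_biUnion (hH.pairwiseDisjoint_sibsOrd_subtree hsub), ← sum_union hdisj]
  exact sum_le_sum_of_subset_of_nonneg hpairs fun p _ _ => hpos _ _

end

theorem stmt_17_general {α : Type*} [DecidableEq α] (X : Finset α)
    (ψ : Finset α → Finset α → ℝ) (hpos : ∀ A B, 0 ≤ ψ A B)
    (h : Finset α → ℝ)
    (hadm : ∀ C : Finset α, C ⊆ X → ∀ H', IsHC C H' → h C ≤ cost ψ H')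
    (Hb H : Finset (Finset α)) (hsub : Hb ⊆ H) (hH : IsHC X H) :
    cost ψ Hb + ∑ A ∈ lvs Hb, h A ≤ cost ψ H := by
  have hleaf : ∀ A ∈ lvs Hb, h A ≤ cost ψ (subtree H A) := fun A hA =>
    have hAH : A ∈ H := hsub (mem_filter.mp hA).1
    hadm A (hH.subset_of_mem hAH) _ (hH.isHC_subtree hAH)
  linarith [sum_le_sum hleaf, hH.cost_add_sum_cost_subtree_le hpos hsub]

/-- If the heuristic `h` is admissible, i.e. `h(X_ℓ)` lower-bounds the cost of every binary
hierarchical clustering of `X_ℓ`, then for every partial hierarchical clustering `H̆` of `X`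
(a subset, containing `X`, of a complete binary hierarchical clustering), the value
`g(H̆) + ∑_{X_ℓ ∈ lvs(H̆)} h(X_ℓ)` lower-bounds the cost of every complete binary
hierarchical clustering `H` of `X` extending `H̆`. (Costs use `ψ ≥ 0`, symmetric.) -/
theorem stmt_17 {α : Type*} [DecidableEq α] (X : Finset α)
    (ψ : Finset α → Finset α → ℝ) (hpos : ∀ A B, 0 ≤ ψ A B)
    (hsymm : ∀ A B, ψ A B = ψ B A)
    (h : Finset α → ℝ)
    (hadm : ∀ C : Finset α, C ⊆ X → ∀ H', IsHC C H' → h C ≤ cost ψ H')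
    (Hb H : Finset (Finset α)) (hroot : X ∈ Hb) (hsub : Hb ⊆ H) (hH : IsHC X H) :
    cost ψ Hb + ∑ A ∈ lvs Hb, h A ≤ cost ψ H :=
  stmt_17_general X ψ hpos h hadm Hb H hsub hH
end
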